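/- Let G = (V, E, w) be a weighted directed graph with no negative cycle, s ∈ V, and h ≥ 2. Let C ⊆ V be a set of vertices that hits (intersects) the vertex set of the lexicographically smallest shortest ⌊h/2⌋-hop path with exactly ⌊h/2⌋ edges between every pair of vertices for which such a path exists. Define a complete graph H on vertex set C ∪ {s} with edge weights w_H(x,y) = d_G^h(x,y). Then for every t ∈ V, d_G(s,t) = min over x ∈ C ∪ {s} of (d_H(s,x) + d_G^h(x,t)). -/

import Mathlib

/-!
Cut a shortest `s`–`t` path into windows of `⌊h/2⌋` edges. For a window from `u` to `v`, the
chosen path `π = π^{⌊h/2⌋}(u, v)` is no heavier. If `π` has exactly `⌊h/2⌋` edges it passes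
through a vertex of `C`, where we cut; otherwise replacing the window by `π` gives a shorter walk
that is no heavier, and we start again. Two consecutive cut vertices are joined by the tail of one
`π` followed by at most `⌊h/2⌋` further edges, so by at most `h` edges in all. The path is
therefore dominated by a walk in `H` from `s` to some `x` followed by an `h`-hop path from `x`
to `t`. The reverse inequality is the triangle inequality. Both directions rest on the fact that,
without negative cycles, cutting a closed subwalk out of a walk never increases its weight.
-/

def cycleEdges {V : Type*} (l : List V) : List (V × V) := l.zip (l.rotate 1)

def IsCycle {V : Type*} (E : V → V → Prop) (l : List V) : Prop :=
  l ≠ [] ∧ ∀ p ∈ cycleEdges l, E p.1 p.2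

def cycleWeight {V : Type*} (w : V → V → ℝ) (l : List V) : ℝ :=
  ((cycleEdges l).map fun p => w p.1 p.2).sum

def IsWalk {V : Type*} (E : V → V → Prop) (a b : V) (l : List V) : Prop :=
  l ≠ [] ∧ l.head? = some a ∧ l.getLast? = some b ∧ l.Chain' E

def walkWeight {V : Type*} (w : V → V → ℝ) (l : List V) : ℝ :=
  ((l.zip l.tail).map fun p => w p.1 p.2).sum

def IsPath {V : Type*} (E : V → V → Prop) (a b : V) (l : List V) : Prop :=
  IsWalk E a b l ∧ l.Nodup

noncomputable def pathDist {V : Type*} (E : V → V → Prop) (w : V → V → ℝ) (a b : V) : EReal :=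
  sInf {x : EReal | ∃ l, IsPath E a b l ∧ (walkWeight w l : EReal) = x}

noncomputable def hopDist {V : Type*} (E : V → V → Prop) (w : V → V → ℝ) (h : ℕ)
    (a b : V) : EReal :=
  sInf {x : EReal | ∃ l, IsPath E a b l ∧ l.length - 1 ≤ h ∧ (walkWeight w l : EReal) = x}

/-- Shortest-path distance in the complete graph `H` on vertex set `Cs`, whose
edge `(x, y)` has weight `hopDist E w h x y`. -/
noncomputable def auxDist {V : Type*} (E : V → V → Prop) (w : V → V → ℝ) (h : ℕ)
    (Cs : Set V) (a b : V) : EReal :=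
  sInf {x : EReal | ∃ l : List V, (∀ v ∈ l, v ∈ Cs) ∧ l ≠ [] ∧
    l.head? = some a ∧ l.getLast? = some b ∧ l.Nodup ∧
    ((l.zip l.tail).map fun p => hopDist E w h p.1 p.2).sum = x}

section EdgeSum

variable {V M : Type*} [AddCommMonoid M]

def edgeSum (f : V → V → M) (l : List V) : M :=
  ((l.zip l.tail).map fun p => f p.1 p.2).sum

variable (f : V → V → M)

@[simp] lemma edgeSum_nil : edgeSum f [] = 0 := rfl

@[simp] lemma edgeSum_singleton (a : V) : edgeSum f [a] = 0 := rfl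

@[simp] lemma edgeSum_cons_cons (a b : V) (l : List V) :
    edgeSum f (a :: b :: l) = f a b + edgeSum f (b :: l) := rfl

lemma edgeSum_append_cons (l₁ : List V) (v : V) (l₂ : List V) :
    edgeSum f (l₁ ++ v :: l₂) = edgeSum f (l₁ ++ [v]) + edgeSum f (v :: l₂) := by
  induction l₁ with
  | nil => simp
  | cons x xs ih =>
    cases xs with
    | nil => simp
    | cons y ys =>
      simp only [List.cons_append, edgeSum_cons_cons] at ih ⊢
      rw [ih, add_assoc]

end EdgeSum

section Walks

variable {V : Type*} {E : V → V → Prop} {w : V → V → ℝ} {a b c u v : V} {l : List V}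

lemma walkWeight_eq_edgeSum (l : List V) : walkWeight w l = edgeSum w l := rfl

lemma walkWeight_append_cons (l₁ : List V) (v : V) (l₂ : List V) :
    walkWeight w (l₁ ++ v :: l₂) = walkWeight w (l₁ ++ [v]) + walkWeight w (v :: l₂) :=
  edgeSum_append_cons w l₁ v l₂

lemma List.IsChain.rel_of_mem_zip_tail {R : V → V → Prop} :
    ∀ {l : List V}, l.IsChain R → ∀ p ∈ l.zip l.tail, R p.1 p.2
  | [], _, _, hp | [_], _, _, hp => by simp at hp
  | a :: b :: l, hc, p, hp => by
    rw [List.isChain_cons_cons] at hc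
    rcases List.mem_cons.mp hp with rfl | hp
    · exact hc.1
    · exact hc.2.rel_of_mem_zip_tail p hp

lemma List.exists_eq_append_cons_append_cons_of_not_nodup :
    ∀ {l : List V}, ¬ l.Nodup → ∃ x l₁ l₂ l₃, l = l₁ ++ x :: (l₂ ++ x :: l₃)
  | [], h => absurd List.nodup_nil h
  | y :: l, h => by
    by_cases hy : y ∈ l
    · obtain ⟨l₂, l₃, rfl⟩ := List.append_of_mem hy
      exact ⟨y, [], l₂, l₃, rfl⟩
    · obtain ⟨x, l₁, l₂, l₃, rfl⟩ :=
        exists_eq_append_cons_append_cons_of_not_nodup fun hnd => h (List.nodup_cons.mpr ⟨hy, hnd⟩)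
      exact ⟨x, y :: l₁, l₂, l₃, rfl⟩

lemma isWalk_singleton (a : V) : IsWalk E a a [a] :=
  ⟨List.cons_ne_nil _ _, rfl, rfl, .singleton a⟩

lemma IsWalk.exists_eq_cons (hl : IsWalk E a b l) : ∃ l', l = a :: l' :=
  List.head?_eq_some_iff.mp hl.2.1

lemma IsWalk.exists_eq_append_singleton (hl : IsWalk E a b l) : ∃ l', l = l' ++ [b] :=
  List.getLast?_eq_some_iff.mp hl.2.2.1

lemma isWalk_iff :
    IsWalk E a b l ↔ l ≠ [] ∧ l.head? = some a ∧ l.getLast? = some b ∧ l.IsChain E :=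
  Iff.rfl

lemma isWalk_append_cons_iff {l₁ l₂ : List V} :
    IsWalk E a b (l₁ ++ v :: l₂) ↔ IsWalk E a v (l₁ ++ [v]) ∧ IsWalk E v b (v :: l₂) := by
  simp only [isWalk_iff]
  rw [List.isChain_split, List.getLast?_append_cons]
  simp only [ne_eq, List.append_eq_nil_iff, reduceCtorEq, and_false, not_false_eq_true,
    List.head?_append, List.head?_cons, Option.or_some, Option.some.injEq, true_and,
    List.cons_ne_self, List.getLast?_append, List.getLast?_singleton, Option.some_or]
  tauto

lemma IsWalk.exists_append {p q : List V} (hp : IsWalk E a b p) (hq : IsWalk E b c q) :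
    ∃ r, IsWalk E a c r ∧ r.length + 1 = p.length + q.length ∧
      walkWeight w r = walkWeight w p + walkWeight w q := by
  obtain ⟨p', rfl⟩ := hp.exists_eq_append_singleton
  obtain ⟨q', rfl⟩ := hq.exists_eq_cons
  exact ⟨p' ++ b :: q', isWalk_append_cons_iff.mpr ⟨hp, hq⟩, by simp; omega,
    walkWeight_append_cons p' b q'⟩

lemma exists_nodup_sublist_edgeSum_le {M : Type*} [AddCommMonoid M] [PartialOrder M]
    [IsOrderedAddMonoid M] {R : V → V → Prop} {f : V → V → M}
    (hcyc : ∀ x c, (x :: c ++ [x]).IsChain R → 0 ≤ edgeSum f (x :: c ++ [x]))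
    {l : List V} (hl : l.IsChain R) :
    ∃ l', l'.Nodup ∧ l'.Sublist l ∧ l'.IsChain R ∧ l'.head? = l.head? ∧
      l'.getLast? = l.getLast? ∧ edgeSum f l' ≤ edgeSum f l := by
  by_cases hnd : l.Nodup
  · exact ⟨l, hnd, .refl l, hl, rfl, rfl, le_rfl⟩
  obtain ⟨x, l₁, l₂, l₃, rfl⟩ := List.exists_eq_append_cons_append_cons_of_not_nodup hnd
  rw [List.isChain_split, List.isChain_cons_split] at hl
  obtain ⟨h₁, hloop, h₃⟩ := hl
  obtain ⟨l', hnd', hsub, hchain, hhead, hlast, hle⟩ :=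
    exists_nodup_sublist_edgeSum_le hcyc (List.isChain_split.mpr ⟨h₁, h₃⟩)
  have hsplit : edgeSum f (l₁ ++ x :: (l₂ ++ x :: l₃)) =
      edgeSum f (l₁ ++ [x]) + (edgeSum f (x :: l₂ ++ [x]) + edgeSum f (x :: l₃)) := by
    rw [edgeSum_append_cons, ← List.cons_append, edgeSum_append_cons f (x :: l₂)]
  refine ⟨l', hnd', hsub.trans (by simp), hchain, hhead.trans (by simp [List.head?_append]),
    hlast.trans ?_, hle.trans ?_⟩
  · rw [List.getLast?_append_cons, List.getLast?_append_cons, ← List.cons_append,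
      List.getLast?_append_cons]
  · rw [hsplit, edgeSum_append_cons]
    exact add_le_add le_rfl (le_add_of_nonneg_left (hcyc x l₂ hloop))
termination_by l.length
decreasing_by subst_vars; simp

lemma walkWeight_cycle_nonneg (hNoNeg : ¬ ∃ l, IsCycle E l ∧ cycleWeight w l < 0) {x : V}
    {c : List V} (hc : (x :: c ++ [x]).IsChain E) : 0 ≤ walkWeight w (x :: c ++ [x]) := by
  have hedges : cycleEdges (x :: c) = (x :: c ++ [x]).zip (x :: c ++ [x]).tail := by
    rw [cycleEdges, List.rotate_cons_succ, List.rotate_zero, List.cons_append, List.tail_cons,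
      ← List.cons_append, ← List.append_nil (c ++ [x]), List.zip_append (by simp)]
    simp
  by_contra hneg
  refine hNoNeg ⟨x :: c, ⟨List.cons_ne_nil _ _, ?_⟩, ?_⟩
  · rw [hedges]
    exact hc.rel_of_mem_zip_tail
  · rw [cycleWeight, hedges]
    exact lt_of_not_ge hneg

lemma IsWalk.exists_isPath (hNoNeg : ¬ ∃ l, IsCycle E l ∧ cycleWeight w l < 0)
    (hl : IsWalk E a b l) :
    ∃ p, IsPath E a b p ∧ p.length ≤ l.length ∧ walkWeight w p ≤ walkWeight w l := by
  obtain ⟨p, hnd, hsub, hchain, hhead, hlast, hle⟩ :=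
    exists_nodup_sublist_edgeSum_le (fun x c hc => walkWeight_cycle_nonneg hNoNeg hc) hl.2.2.2
  refine ⟨p, ⟨⟨?_, hhead.trans hl.2.1, hlast.trans hl.2.2.1, hchain⟩, hnd⟩, hsub.length_le, hle⟩
  rintro rfl
  simp [hl.2.1] at hhead

lemma IsWalk.walkWeight_nonneg (hNoNeg : ¬ ∃ l, IsCycle E l ∧ cycleWeight w l < 0)
    (hl : IsWalk E a a l) : 0 ≤ walkWeight w l := by
  obtain ⟨l', rfl⟩ := hl.exists_eq_cons
  rcases l'.eq_nil_or_concat' with rfl | ⟨c, x, rfl⟩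
  · exact le_of_eq (edgeSum_singleton w a).symm
  · have hlast := hl.2.2.1
    rw [← List.cons_append, List.getLast?_concat, Option.some_inj] at hlast
    subst hlast
    exact walkWeight_cycle_nonneg hNoNeg hl.2.2.2

lemma hopDist_le_walkWeight {h : ℕ} (hNoNeg : ¬ ∃ l, IsCycle E l ∧ cycleWeight w l < 0)
    (hl : IsWalk E a b l) (hlen : l.length - 1 ≤ h) : hopDist E w h a b ≤ walkWeight w l := by
  obtain ⟨p, hp, hplen, hpw⟩ := hl.exists_isPath hNoNeg
  calc hopDist E w h a b ≤ walkWeight w p := sInf_le ⟨p, hp, by omega, rfl⟩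
    _ ≤ walkWeight w l := EReal.coe_le_coe_iff.mpr hpw

lemma pathDist_le_hopDist (h : ℕ) (a b : V) : pathDist E w a b ≤ hopDist E w h a b :=
  sInf_le_sInf fun _ ⟨l, hl, _, hx⟩ => ⟨l, hl, hx⟩

lemma pathDist_le_walkWeight (hNoNeg : ¬ ∃ l, IsCycle E l ∧ cycleWeight w l < 0)
    (hl : IsWalk E a b l) : pathDist E w a b ≤ walkWeight w l :=
  (pathDist_le_hopDist _ a b).trans (hopDist_le_walkWeight hNoNeg hl le_rfl)

lemma pathDist_self (hNoNeg : ¬ ∃ l, IsCycle E l ∧ cycleWeight w l < 0) (a : V) :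
    pathDist E w a a = 0 := by
  refine le_antisymm ?_ (le_sInf fun _ ⟨l, hl, hx⟩ => hx ▸ ?_)
  · simpa [walkWeight_eq_edgeSum] using
      pathDist_le_walkWeight hNoNeg (isWalk_singleton (E := E) a)
  · exact EReal.coe_nonneg.mpr (hl.1.walkWeight_nonneg hNoNeg)

lemma pathDist_eq_top_or_exists [Fintype V] (a b : V) :
    pathDist E w a b = ⊤ ∨ ∃ l, IsPath E a b l ∧ pathDist E w a b = walkWeight w l := by
  unfold pathDist
  set S := {x : EReal | ∃ l, IsPath E a b l ∧ (walkWeight w l : EReal) = x}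
  have hS : S.Finite := by
    refine ((List.finite_length_le V (Fintype.card V)).image
      fun l => (walkWeight w l : EReal)).subset ?_
    rintro _ ⟨l, hl, rfl⟩
    exact ⟨l, hl.2.length_le_card, rfl⟩
  rcases S.eq_empty_or_nonempty with hempty | hne
  · exact Or.inl (by rw [hempty, sInf_empty])
  · obtain ⟨l, hl, hx⟩ := hne.csInf_mem hS
    exact Or.inr ⟨l, hl, hx.symm⟩

lemma pathDist_triangle [Fintype V] (hNoNeg : ¬ ∃ l, IsCycle E l ∧ cycleWeight w l < 0)
    (a b c : V) : pathDist E w a c ≤ pathDist E w a b + pathDist E w b c := by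
  rcases pathDist_eq_top_or_exists (E := E) (w := w) a b with hab | ⟨p, hp, hab⟩ <;>
    rcases pathDist_eq_top_or_exists (E := E) (w := w) b c with hbc | ⟨q, hq, hbc⟩ <;>
    rw [hab, hbc]
  · simp
  · simp
  · simp
  · obtain ⟨r, hr, -, hrw⟩ := hp.1.exists_append (w := w) hq.1
    exact (pathDist_le_walkWeight hNoNeg hr).trans_eq (by rw [hrw, EReal.coe_add])

lemma pathDist_le_edgeSum_hopDist [Fintype V] (hNoNeg : ¬ ∃ l, IsCycle E l ∧ cycleWeight w l < 0)
    (h : ℕ) : ∀ {m : List V} {a b : V}, m.head? = some a → m.getLast? = some b →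
      pathDist E w a b ≤ edgeSum (hopDist E w h) m
  | [], _, _, ha, _ => by simp at ha
  | [x], a, b, ha, hb => by
    obtain rfl : x = a := by simpa using ha
    obtain rfl : x = b := by simpa using hb
    simp [pathDist_self hNoNeg]
  | x :: y :: m, a, b, ha, hb => by
    obtain rfl : x = a := by simpa using ha
    rw [List.getLast?_cons_cons] at hb
    calc pathDist E w x b ≤ pathDist E w x y + pathDist E w y b := pathDist_triangle hNoNeg x y b
      _ ≤ hopDist E w h x y + edgeSum (hopDist E w h) (y :: m) :=
        add_le_add (pathDist_le_hopDist h x y) (pathDist_le_edgeSum_hopDist hNoNeg h rfl hb)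

lemma pathDist_le_auxDist [Fintype V] (hNoNeg : ¬ ∃ l, IsCycle E l ∧ cycleWeight w l < 0)
    (h : ℕ) (Cs : Set V) (a b : V) : pathDist E w a b ≤ auxDist E w h Cs a b :=
  le_sInf fun _ ⟨_, _, _, ha, hb, _, hx⟩ => hx ▸ pathDist_le_edgeSum_hopDist hNoNeg h ha hb

lemma auxDist_le_edgeSum_hopDist [Fintype V] (hNoNeg : ¬ ∃ l, IsCycle E l ∧ cycleWeight w l < 0)
    {h : ℕ} {Cs : Set V} {m : List V} (hm : ∀ v ∈ m, v ∈ Cs) (ha : m.head? = some a)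
    (hb : m.getLast? = some b) : auxDist E w h Cs a b ≤ edgeSum (hopDist E w h) m := by
  have hcyc (x : V) (c : List V) : 0 ≤ edgeSum (hopDist E w h) (x :: c ++ [x]) :=
    (pathDist_self hNoNeg x).ge.trans
      (pathDist_le_edgeSum_hopDist hNoNeg h rfl (List.getLast?_concat ..))
  obtain ⟨m', hnd, hsub, -, hhead, hlast, hle⟩ := exists_nodup_sublist_edgeSum_le
    (R := fun _ _ => True) (l := m) (fun x c _ => hcyc x c)
    (List.isChain_iff_forall_rel_of_append_cons_cons.mpr fun _ _ _ _ _ => trivial)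
  have hne : m' ≠ [] := by
    rintro rfl
    simp [ha] at hhead
  calc auxDist E w h Cs a b ≤ edgeSum (hopDist E w h) m' :=
        sInf_le ⟨m', fun v hv => hm v (hsub.subset hv), hne, hhead.trans ha, hlast.trans hb,
          hnd, rfl⟩
    _ ≤ edgeSum (hopDist E w h) m := hle

def IsShortestHopPaths (E : V → V → Prop) (w : V → V → ℝ) (k : ℕ) (pi : V → V → List V) :
    Prop :=
  ∀ u v, (∃ l, IsPath E u v l ∧ l.length - 1 ≤ k) →
    IsPath E u v (pi u v) ∧ (pi u v).length - 1 ≤ k ∧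
      ∀ q, IsPath E u v q → q.length - 1 ≤ k → walkWeight w (pi u v) ≤ walkWeight w q

def HitsFullHopPaths (E : V → V → Prop) (k : ℕ) (pi : V → V → List V) (C : Set V) : Prop :=
  ∀ u v, (∃ l, IsPath E u v l ∧ l.length - 1 ≤ k) → (pi u v).length - 1 = k → ∃ x ∈ C, x ∈ pi u v

lemma IsShortestHopPaths.walkWeight_le {k : ℕ} {pi : V → V → List V}
    (hpi : IsShortestHopPaths E w k pi) (hNoNeg : ¬ ∃ l, IsCycle E l ∧ cycleWeight w l < 0)
    (hl : IsWalk E u v l) (hlen : l.length - 1 ≤ k) :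
    IsPath E u v (pi u v) ∧ (pi u v).length - 1 ≤ k ∧ walkWeight w (pi u v) ≤ walkWeight w l := by
  obtain ⟨p, hp, hplen, hpw⟩ := hl.exists_isPath hNoNeg
  obtain ⟨hpath, hlen', hmin⟩ := hpi u v ⟨p, hp, by omega⟩
  exact ⟨hpath, hlen', (hmin p hp (by omega)).trans hpw⟩

-- `p` is the pending tail of the last chosen `π` (at most `k` edges): together with the next
-- at most `k` edges of `l` it forms one piece of at most `h` edges of the chain.
theorem exists_hopDist_chain_le {k h : ℕ} {pi : V → V → List V} {C : Set V}
    (hNoNeg : ¬ ∃ l, IsCycle E l ∧ cycleWeight w l < 0) (hk : 1 ≤ k) (hkh : k + k ≤ h)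
    (hpi : IsShortestHopPaths E w k pi) (hC : HitsFullHopPaths E k pi C) {a u t : V}
    {p l : List V} (hp : IsWalk E a u p) (hplen : p.length ≤ k + 1) (hl : IsWalk E u t l) :
    ∃ xs : List V, (∀ x ∈ xs, x ∈ C) ∧
      edgeSum (hopDist E w h) (a :: xs ++ [t]) ≤
        ((walkWeight w p + walkWeight w l : ℝ) : EReal) := by
  by_cases hshort : l.length ≤ k + 1
  · obtain ⟨r, hr, hrlen, hrw⟩ := hp.exists_append (w := w) hl
    refine ⟨[], by simp, ?_⟩
    simpa [hrw] using hopDist_le_walkWeight hNoNeg hr (by omega)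
  obtain ⟨A, v, B, rfl, hA⟩ : ∃ A v B, l = A ++ v :: B ∧ A.length = k :=
    ⟨l.take k, l[k], l.drop (k + 1), by simp, by simp; omega⟩
  obtain ⟨hW, hR⟩ := isWalk_append_cons_iff.mp hl
  obtain ⟨hπ, hπlen, hπw⟩ := hpi.walkWeight_le hNoNeg hW (by simp [hA])
  have hlw := walkWeight_append_cons (w := w) A v B
  by_cases hfull : (pi u v).length - 1 = k
  · obtain ⟨x, hxC, hxπ⟩ := hC u v ⟨_, hπ, hπlen⟩ hfull
    obtain ⟨π₁, π₂, hπeq⟩ := List.append_of_mem hxπ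
    rw [hπeq] at hπ hπw hfull
    obtain ⟨hπ₁, hπ₂⟩ := isWalk_append_cons_iff.mp hπ.1
    have hπsplit := walkWeight_append_cons (w := w) π₁ x π₂
    have hdec : (v :: B).length < (A ++ v :: B).length := by simp; omega
    obtain ⟨xs, hxs, hle⟩ :=
      exists_hopDist_chain_le hNoNeg hk hkh hpi hC hπ₂ (by simp at hfull ⊢; omega) hR
    obtain ⟨r', hr', hr'len, hr'w⟩ := hp.exists_append (w := w) hπ₁
    refine ⟨x :: xs, by simpa [hxC] using hxs, ?_⟩
    calc edgeSum (hopDist E w h) (a :: (x :: xs) ++ [t])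
        = hopDist E w h a x + edgeSum (hopDist E w h) (x :: xs ++ [t]) := rfl
      _ ≤ (walkWeight w r' : EReal) +
            ((walkWeight w (x :: π₂) + walkWeight w (v :: B) : ℝ) : EReal) :=
        add_le_add (hopDist_le_walkWeight hNoNeg hr' (by simp at hr'len hfull; omega)) hle
      _ ≤ ((walkWeight w p + walkWeight w (A ++ v :: B) : ℝ) : EReal) := by
        rw [← EReal.coe_add, EReal.coe_le_coe_iff]
        linarith
  · obtain ⟨r', hr', hr'len, hr'w⟩ := hπ.1.exists_append (w := w) hR
    have hdec : r'.length < (A ++ v :: B).length := by simp at hr'len ⊢; omega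
    obtain ⟨xs, hxs, hle⟩ := exists_hopDist_chain_le hNoNeg hk hkh hpi hC hp hplen hr'
    exact ⟨xs, hxs, hle.trans (EReal.coe_le_coe_iff.mpr (by linarith))⟩
termination_by l.length
decreasing_by all_goals subst_vars; exact hdec

lemma iInf_auxDist_add_hopDist_le [Fintype V] (hNoNeg : ¬ ∃ l, IsCycle E l ∧ cycleWeight w l < 0)
    {h : ℕ} {s t : V} {C : Set V} {xs : List V} (hxs : ∀ x ∈ xs, x ∈ C) :
    ⨅ x ∈ insert s C, auxDist E w h (insert s C) s x + hopDist E w h x t ≤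
      edgeSum (hopDist E w h) (s :: xs ++ [t]) := by
  obtain ⟨ys, y, hy⟩ := (s :: xs).eq_nil_or_concat'.resolve_left (List.cons_ne_nil _ _)
  have hmem : ∀ v ∈ ys ++ [y], v ∈ insert s C := by
    rw [← hy]
    simpa using fun x hx => Or.inr (hxs x hx)
  calc ⨅ x ∈ insert s C, auxDist E w h (insert s C) s x + hopDist E w h x t
      ≤ auxDist E w h (insert s C) s y + hopDist E w h y t :=
        iInf₂_le y (hmem y (by simp))
    _ ≤ edgeSum (hopDist E w h) (ys ++ [y]) + edgeSum (hopDist E w h) [y, t] :=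
        add_le_add (auxDist_le_edgeSum_hopDist hNoNeg hmem (by rw [← hy]; rfl)
          (List.getLast?_concat ..)) (by simp)
    _ = edgeSum (hopDist E w h) (s :: xs ++ [t]) := by
        rw [← edgeSum_append_cons, hy, List.append_assoc, List.singleton_append]

end Walks

theorem stmt9 {V : Type*} [Fintype V] [LinearOrder V]
    (E : V → V → Prop) (w : V → V → ℝ)
    (hNoNeg : ¬ ∃ l, IsCycle E l ∧ cycleWeight w l < 0)
    (s : V) (h : ℕ) (hh : 2 ≤ h) (C : Set V) (pi : V → V → List V)
    (hpi : ∀ u v : V, (∃ l, IsPath E u v l ∧ l.length - 1 ≤ h / 2) →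
      (IsPath E u v (pi u v) ∧ (pi u v).length - 1 ≤ h / 2 ∧
       (∀ q, IsPath E u v q → q.length - 1 ≤ h / 2 →
          walkWeight w (pi u v) ≤ walkWeight w q) ∧
       (∀ q, IsPath E u v q → q.length - 1 ≤ h / 2 →
          walkWeight w q = walkWeight w (pi u v) →
          pi u v = q ∨ List.Lex (· < ·) (pi u v) q)))
    (hHit : ∀ u v : V, (∃ l, IsPath E u v l ∧ l.length - 1 ≤ h / 2) →
      (pi u v).length - 1 = h / 2 → ∃ x ∈ C, x ∈ pi u v) :
    ∀ t : V, pathDist E w s t =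
      ⨅ x ∈ insert s C, auxDist E w h (insert s C) s x + hopDist E w h x t := by
  have hshortest : IsShortestHopPaths E w (h / 2) pi := fun u v hex =>
    let ⟨hpath, hlen, hmin, _⟩ := hpi u v hex
    ⟨hpath, hlen, hmin⟩
  intro t
  refine le_antisymm (le_iInf₂ fun x _ => ?_) (le_sInf ?_)
  · calc pathDist E w s t ≤ pathDist E w s x + pathDist E w x t := pathDist_triangle hNoNeg s x t
      _ ≤ auxDist E w h (insert s C) s x + hopDist E w h x t :=
        add_le_add (pathDist_le_auxDist hNoNeg h _ s x) (pathDist_le_hopDist h x t)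
  · rintro _ ⟨l, hl, rfl⟩
    obtain ⟨xs, hxs, hle⟩ := exists_hopDist_chain_le (h := h) hNoNeg (by omega) (by omega)
      hshortest hHit (isWalk_singleton s) le_add_self hl.1
    refine (iInf_auxDist_add_hopDist_le hNoNeg hxs).trans (hle.trans_eq ?_)
    simp [walkWeight_eq_edgeSum]
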